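/- arXiv:2002.05101 — 6 statements merged into one kernel-verified Lean document; each statement's English description precedes it below -/
import Mathlib

section
/- Let f₁ : ℝ^{|I₁|} → ℝ be continuous, homogeneous of degree 2d with d ≥ 1, and suppose there is ε > 0 and a continuous f₂ such that f₁(ξ,y) + f₂(y,z) ≥ ε‖(ξ,y,z)‖₂^{2d} for all (ξ,y,z). Then for each fixed y, the function ξ ↦ f₁(ξ,y) − (ε/2)‖(ξ,y)‖₂^{2d} is coercive in ξ and hence attains its minimum, so h(y) := min_ξ { f₁(ξ,y) − (ε/2)‖(ξ,y)‖₂^{2d} } is well-defined. -/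
open Filter

/-!
Taking `z = 0` in the positivity hypothesis gives
`f₁ (ξ, y) - ε/2 (‖ξ‖² + ‖y‖²)^d ≥ ε/2 ‖ξ‖^{2d} - f₂ (y, 0)`, so the function is coercive in `ξ`;
being continuous on a finite-dimensional space, it attains its minimum.
-/

theorem tendsto_cocompact_atTop_of_mul_norm_pow_sub_le {E : Type*} [NormedAddCommGroup E]
    [ProperSpace E] {g : E → ℝ} {c C : ℝ} {n : ℕ} (hc : 0 < c) (hn : n ≠ 0)
    (hg : ∀ x, c * ‖x‖ ^ n - C ≤ g x) : Tendsto g (cocompact E) atTop := by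
  refine tendsto_atTop_mono hg (tendsto_atTop_add_const_right _ (-C) ?_)
  exact (tendsto_pow_atTop hn).comp tendsto_norm_cocompact_atTop |>.const_mul_atTop hc

theorem stmt_4_general (a b c d : ℕ) (hd : 1 ≤ d) (ε : ℝ) (hε : 0 < ε)
    (f₁ : EuclideanSpace ℝ (Fin a) × EuclideanSpace ℝ (Fin b) → ℝ)
    (f₂ : EuclideanSpace ℝ (Fin b) × EuclideanSpace ℝ (Fin c) → ℝ)
    (hc₁ : Continuous f₁)
    (hpos : ∀ ξ y z, ε * (‖ξ‖ ^ 2 + ‖y‖ ^ 2 + ‖z‖ ^ 2) ^ d ≤ f₁ (ξ, y) + f₂ (y, z)) :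
    ∀ y : EuclideanSpace ℝ (Fin b),
      Tendsto (fun ξ : EuclideanSpace ℝ (Fin a) =>
          f₁ (ξ, y) - ε / 2 * (‖ξ‖ ^ 2 + ‖y‖ ^ 2) ^ d) (cocompact _) atTop ∧
      ∃ ξ₀ : EuclideanSpace ℝ (Fin a), ∀ ξ : EuclideanSpace ℝ (Fin a),
        f₁ (ξ₀, y) - ε / 2 * (‖ξ₀‖ ^ 2 + ‖y‖ ^ 2) ^ d
          ≤ f₁ (ξ, y) - ε / 2 * (‖ξ‖ ^ 2 + ‖y‖ ^ 2) ^ d := by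
  intro y
  have hcoercive : Tendsto (fun ξ : EuclideanSpace ℝ (Fin a) =>
      f₁ (ξ, y) - ε / 2 * (‖ξ‖ ^ 2 + ‖y‖ ^ 2) ^ d) (cocompact _) atTop := by
    refine tendsto_cocompact_atTop_of_mul_norm_pow_sub_le (n := 2 * d) (C := f₂ (y, 0))
      (half_pos hε) (by omega) fun ξ => ?_
    have hz := hpos ξ y 0
    rw [norm_zero, zero_pow two_ne_zero, add_zero] at hz
    have hξ : ‖ξ‖ ^ (2 * d) ≤ (‖ξ‖ ^ 2 + ‖y‖ ^ 2) ^ d :=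
      pow_mul ‖ξ‖ 2 d ▸ pow_le_pow_left₀ (sq_nonneg _) (le_add_of_nonneg_right (sq_nonneg _)) d
    linarith [mul_le_mul_of_nonneg_left hξ (half_pos hε).le]
  exact ⟨hcoercive, (by fun_prop : Continuous _).exists_forall_le hcoercive⟩

theorem stmt_4 (a b c d : ℕ) (hd : 1 ≤ d) (ε : ℝ) (hε : 0 < ε)
    (f₁ : EuclideanSpace ℝ (Fin a) × EuclideanSpace ℝ (Fin b) → ℝ)
    (f₂ : EuclideanSpace ℝ (Fin b) × EuclideanSpace ℝ (Fin c) → ℝ)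
    (hc₁ : Continuous f₁) (hc₂ : Continuous f₂)
    (hhom₁ : ∀ (t : ℝ) ξ y, f₁ (t • ξ, t • y) = t ^ (2 * d) * f₁ (ξ, y))
    (hpos : ∀ ξ y z, ε * (‖ξ‖ ^ 2 + ‖y‖ ^ 2 + ‖z‖ ^ 2) ^ d ≤ f₁ (ξ, y) + f₂ (y, z)) :
    ∀ y : EuclideanSpace ℝ (Fin b),
      Tendsto (fun ξ : EuclideanSpace ℝ (Fin a) =>
          f₁ (ξ, y) - ε / 2 * (‖ξ‖ ^ 2 + ‖y‖ ^ 2) ^ d) (cocompact _) atTop ∧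
      ∃ ξ₀ : EuclideanSpace ℝ (Fin a), ∀ ξ : EuclideanSpace ℝ (Fin a),
        f₁ (ξ₀, y) - ε / 2 * (‖ξ₀‖ ^ 2 + ‖y‖ ^ 2) ^ d
          ≤ f₁ (ξ, y) - ε / 2 * (‖ξ‖ ^ 2 + ‖y‖ ^ 2) ^ d :=
  stmt_4_general a b c d hd ε hε f₁ f₂ hc₁ hpos
end

section
/- If f : ℝⁿ → ℝ is homogeneous of degree 2d and f₂ : ℝ^b → ℝ satisfies f(ξ, y, z) ≥ ε‖(ξ,y,z)‖₂^{2d} for all (ξ,y,z), and h(y) = min_ξ ( f₁(ξ,y) − (ε/2)‖(ξ,y)‖₂^{2d} ) where f = f₁ + f₂ with f₁ depending on (ξ,y) and f₂ on (y,z), then f₂(y,z) + h(y) ≥ (ε/2)‖(y,z)‖₂^{2d} for all (y,z). -/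
/-! Choose `ξ₀` attaining the minimum defining `h y`. Then
`f₂ (y, z) + h y = f (ξ₀, y, z) - ε/2 ‖(ξ₀, y)‖^{2d} ≥ ε ‖(ξ₀, y, z)‖^{2d} - ε/2 ‖(ξ₀, y)‖^{2d}`,
and both `‖(ξ₀, y)‖` and `‖(y, z)‖` are at most `‖(ξ₀, y, z)‖`. -/

lemma add_pow_add_add_pow_le_two_mul_pow {p q r : ℝ} (hp : 0 ≤ p) (hq : 0 ≤ q) (hr : 0 ≤ r)
    (d : ℕ) : (p + q) ^ d + (q + r) ^ d ≤ 2 * (p + q + r) ^ d := by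
  have hpq : (p + q) ^ d ≤ (p + q + r) ^ d :=
    pow_le_pow_left₀ (by positivity) (by linarith) d
  have hqr : (q + r) ^ d ≤ (p + q + r) ^ d :=
    pow_le_pow_left₀ (by positivity) (by linarith) d
  linarith

theorem stmt_9_general (a b c d : ℕ) (ε : ℝ) (hε : 0 < ε)
    (f₁ : EuclideanSpace ℝ (Fin a) × EuclideanSpace ℝ (Fin b) → ℝ)
    (f₂ : EuclideanSpace ℝ (Fin b) × EuclideanSpace ℝ (Fin c) → ℝ)
    (hpos : ∀ ξ y z, ε * (‖ξ‖ ^ 2 + ‖y‖ ^ 2 + ‖z‖ ^ 2) ^ d ≤ f₁ (ξ, y) + f₂ (y, z))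
    (h : EuclideanSpace ℝ (Fin b) → ℝ)
    (hmin : ∀ y : EuclideanSpace ℝ (Fin b),
      ∃ ξ₀ : EuclideanSpace ℝ (Fin a),
        h y = f₁ (ξ₀, y) - ε / 2 * (‖ξ₀‖ ^ 2 + ‖y‖ ^ 2) ^ d ∧
        ∀ ξ, h y ≤ f₁ (ξ, y) - ε / 2 * (‖ξ‖ ^ 2 + ‖y‖ ^ 2) ^ d) :
    ∀ (y : EuclideanSpace ℝ (Fin b)) (z : EuclideanSpace ℝ (Fin c)),
      ε / 2 * (‖y‖ ^ 2 + ‖z‖ ^ 2) ^ d ≤ f₂ (y, z) + h y := by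
  intro y z
  obtain ⟨ξ₀, hξ₀, -⟩ := hmin y
  have hsplit := mul_le_mul_of_nonneg_left
    (add_pow_add_add_pow_le_two_mul_pow (sq_nonneg ‖ξ₀‖) (sq_nonneg ‖y‖) (sq_nonneg ‖z‖) d) hε.le
  rw [hξ₀]
  linarith [hpos ξ₀ y z]

theorem stmt_9 (a b c d : ℕ) (hd : 1 ≤ d) (ε : ℝ) (hε : 0 < ε)
    (f₁ : EuclideanSpace ℝ (Fin a) × EuclideanSpace ℝ (Fin b) → ℝ)
    (f₂ : EuclideanSpace ℝ (Fin b) × EuclideanSpace ℝ (Fin c) → ℝ)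
    (hc₁ : Continuous f₁) (hc₂ : Continuous f₂)
    (hhom₁ : ∀ (t : ℝ) ξ y, f₁ (t • ξ, t • y) = t ^ (2 * d) * f₁ (ξ, y))
    (hhom₂ : ∀ (t : ℝ) y z, f₂ (t • y, t • z) = t ^ (2 * d) * f₂ (y, z))
    (hpos : ∀ ξ y z, ε * (‖ξ‖ ^ 2 + ‖y‖ ^ 2 + ‖z‖ ^ 2) ^ d ≤ f₁ (ξ, y) + f₂ (y, z))
    (h : EuclideanSpace ℝ (Fin b) → ℝ)
    (hmin : ∀ y : EuclideanSpace ℝ (Fin b),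
      ∃ ξ₀ : EuclideanSpace ℝ (Fin a),
        h y = f₁ (ξ₀, y) - ε / 2 * (‖ξ₀‖ ^ 2 + ‖y‖ ^ 2) ^ d ∧
        ∀ ξ, h y ≤ f₁ (ξ, y) - ε / 2 * (‖ξ‖ ^ 2 + ‖y‖ ^ 2) ^ d) :
    ∀ (y : EuclideanSpace ℝ (Fin b)) (z : EuclideanSpace ℝ (Fin c)),
      ε / 2 * (‖y‖ ^ 2 + ‖z‖ ^ 2) ^ d ≤ f₂ (y, z) + h y :=
  stmt_9_general a b c d ε hε f₁ f₂ hpos h hmin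
end

section
/- Let f = f₁ + f₂ with f₁(x₁,x₂,x₃,x₄) = x₄²(x₁⁴x₂² + x₂⁴x₃² + x₁²x₃⁴ − 3x₁²x₂²x₃²) + x₃⁸ and f₂ = x₁²x₂²x₃²x₅². Then f is a nonnegative homogeneous form of degree 8 on ℝ⁵ which is not positive definite, since f(0,0,0,1,1) = 0. -/
lemma motzkin_nonneg (a b c : ℝ) : 0 ≤ a^4*b^2 + b^4*c^2 + a^2*c^4 - 3*a^2*b^2*c^2 := by
  nlinarith [sq_nonneg (a^2*b - b*c^2), sq_nonneg (b^2*c - a^2*c), sq_nonneg (a*c^2 - a*b^2), sq_nonneg (a^2*b + b*c^2 - 2*a*b*c), sq_nonneg (b^2*c + a^2*c - 2*a*b*c), sq_nonneg (a*c^2 + a*b^2 - 2*a*b*c), sq_nonneg (a*b*c)]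

theorem stmt_13 (F : ℝ → ℝ → ℝ → ℝ → ℝ → ℝ)
    (hF : ∀ x₁ x₂ x₃ x₄ x₅ : ℝ,
      F x₁ x₂ x₃ x₄ x₅ =
        x₄ ^ 2 * (x₁ ^ 4 * x₂ ^ 2 + x₂ ^ 4 * x₃ ^ 2 + x₁ ^ 2 * x₃ ^ 4
          - 3 * x₁ ^ 2 * x₂ ^ 2 * x₃ ^ 2) + x₃ ^ 8 + x₁ ^ 2 * x₂ ^ 2 * x₃ ^ 2 * x₅ ^ 2) :
    (∀ x₁ x₂ x₃ x₄ x₅ : ℝ, 0 ≤ F x₁ x₂ x₃ x₄ x₅) ∧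
    (∀ c x₁ x₂ x₃ x₄ x₅ : ℝ,
      F (c * x₁) (c * x₂) (c * x₃) (c * x₄) (c * x₅) = c ^ 8 * F x₁ x₂ x₃ x₄ x₅) ∧
    F 0 0 0 1 1 = 0 ∧
    ¬ (∀ x₁ x₂ x₃ x₄ x₅ : ℝ, (x₁, x₂, x₃, x₄, x₅) ≠ (0, 0, 0, 0, 0) →
        0 < F x₁ x₂ x₃ x₄ x₅) := by
  refine ⟨?_, ?_, ?_, ?_⟩
  · intro x₁ x₂ x₃ x₄ x₅
    rw [hF]
    have h := motzkin_nonneg x₁ x₂ x₃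
    have h2 := sq_nonneg x₄
    positivity
  · intro c x₁ x₂ x₃ x₄ x₅
    rw [hF, hF]; ring
  · rw [hF]; norm_num
  · intro h
    have := h 0 0 0 1 1 (by simp)
    rw [hF] at this
    norm_num at this
end

section
/- Assume the Delzell polynomial f₁ = x₄²(x₁⁴x₂² + x₂⁴x₃² + x₁²x₃⁴ − 3x₁²x₂²x₃²) + x₃⁸ is not a sum of squares of polynomials. Then f = f₁ + x₁²x₂²x₃²x₅² cannot be written as σ₁ + σ₂ with σ₁ a sum of squares in ℝ[x₁,x₂,x₃,x₄] and σ₂ a sum of squares in ℝ[x₁,x₂,x₃,x₅]. -/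
open MvPolynomial

theorem IsSumSq.map {R S F : Type*} [Mul R] [AddZeroClass R] [Mul S] [AddZeroClass S]
    [FunLike F R S] [MulHomClass F R S] [AddMonoidHomClass F R S]
    (φ : F) {a : R} (ha : IsSumSq a) : IsSumSq (φ a) := by
  induction ha with
  | zero => simp
  | sq_add x _ ih => simpa using ih.sq_add (φ x)

theorem MvPolynomial.aeval_rename_of_comp_eq_X {σ τ R : Type*} [CommSemiring R]
    {ι : σ → τ} {g : τ → MvPolynomial σ R} (h : g ∘ ι = X) (p : MvPolynomial σ R) :
    aeval g (rename ι p) = p := by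
  rw [aeval_rename, h, aeval_X_left_apply]

theorem stmt_14_general
    (f₁ : MvPolynomial (Fin 4) ℝ)
    (hnotsos : ¬ IsSumSq f₁) :
    ¬ ∃ (σ₁ : MvPolynomial (Fin 4) ℝ) (σ₂ : MvPolynomial (Fin 4) ℝ),
      IsSumSq σ₁ ∧ IsSumSq σ₂ ∧
      rename (![0, 1, 2, 3] : Fin 4 → Fin 5) f₁
          + (X 0 ^ 2 * X 1 ^ 2 * X 2 ^ 2 * X 4 ^ 2 : MvPolynomial (Fin 5) ℝ)
        = rename (![0, 1, 2, 3] : Fin 4 → Fin 5) σ₁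
          + rename (![0, 1, 2, 4] : Fin 4 → Fin 5) σ₂ := by
  rintro ⟨σ₁, σ₂, h₁, h₂, heq⟩
  -- Setting x₅ = 0 fixes ℝ[x₁,…,x₄] and kills the extra monomial.
  let setX₅Zero : MvPolynomial (Fin 5) ℝ →ₐ[ℝ] MvPolynomial (Fin 4) ℝ :=
    aeval ![X 0, X 1, X 2, X 3, 0]
  have hretract : ∀ p, setX₅Zero (rename (![0, 1, 2, 3] : Fin 4 → Fin 5) p) = p :=
    aeval_rename_of_comp_eq_X (by funext i; fin_cases i <;> rfl)
  have hmonomial : setX₅Zero (X 0 ^ 2 * X 1 ^ 2 * X 2 ^ 2 * X 4 ^ 2) = 0 := by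
    simp [setX₅Zero]
  have hdecomp : f₁ = σ₁ + setX₅Zero (rename ![0, 1, 2, 4] σ₂) := by
    simpa only [map_add, hretract, hmonomial, add_zero] using congrArg setX₅Zero heq
  exact hnotsos (hdecomp ▸ h₁.add ((h₂.map _).map _))

theorem stmt_14
    (f₁ : MvPolynomial (Fin 4) ℝ)
    (hf₁ : f₁ = X 3 ^ 2 * (X 0 ^ 4 * X 1 ^ 2 + X 1 ^ 4 * X 2 ^ 2 + X 0 ^ 2 * X 2 ^ 4
        - 3 * X 0 ^ 2 * X 1 ^ 2 * X 2 ^ 2) + X 2 ^ 8)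
    (hnotsos : ¬ IsSumSq f₁) :
    ¬ ∃ (σ₁ : MvPolynomial (Fin 4) ℝ) (σ₂ : MvPolynomial (Fin 4) ℝ),
      IsSumSq σ₁ ∧ IsSumSq σ₂ ∧
      rename (![0, 1, 2, 3] : Fin 4 → Fin 5) f₁
          + (X 0 ^ 2 * X 1 ^ 2 * X 2 ^ 2 * X 4 ^ 2 : MvPolynomial (Fin 5) ℝ)
        = rename (![0, 1, 2, 3] : Fin 4 → Fin 5) σ₁
          + rename (![0, 1, 2, 4] : Fin 4 → Fin 5) σ₂ :=
  stmt_14_general f₁ hnotsos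
end

section
/- Let f₁ = x₁x₂, g₁ = x₂³, g₃ = x₃, f₂ = x₂²x₃. Then f₁ + f₂ cannot be written as σ₁ + ψ₁g₁ + σ₂ + σ₃g₃ with σ₁ ∈ Σ[x₁,x₂], ψ₁ ∈ ℝ[x₁,x₂], σ₂, σ₃ ∈ Σ[x₂,x₃]. -/
/-!
Specialise to `x₁ = 1`, `x₃ = 0`. The identity becomes `x = s + ψ x³` in `ℝ[x]` with `s` a sum of
squares. Since `s(0) = 0`, every square in `s` vanishes at `0`, so `x² ∣ s`; comparing the
coefficients of `x` then gives `1 = 0`.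
-/

theorem IsSumSq.map_s16 {R S F : Type*} [Semiring R] [Semiring S] [FunLike F R S]
    [RingHomClass F R S] (f : F) {s : R} (hs : IsSumSq s) : IsSumSq (f s) := by
  induction hs with
  | zero => simp [IsSumSq.zero]
  | sq_add a _ ih => simp [ih.sq_add (f a)]

section

open Polynomial

variable {R : Type*} [CommRing R] [LinearOrder R] [IsStrictOrderedRing R]

theorem IsSumSq.X_sq_dvd_of_coeff_zero_eq_zero {s : R[X]} (hs : IsSumSq s)
    (h0 : s.coeff 0 = 0) : X ^ 2 ∣ s := by
  induction hs with
  | zero => exact dvd_zero _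
  | @sq_add p t ht ih =>
    have ht0 : 0 ≤ t.coeff 0 := by
      simpa [coeff_zero_eq_eval_zero] using (ht.map_s16 (evalRingHom 0)).nonneg
    have hpt : p.coeff 0 * p.coeff 0 + t.coeff 0 = 0 := by
      simpa [mul_coeff_zero] using h0
    have hp0 : p.coeff 0 = 0 := by nlinarith [mul_self_nonneg (p.coeff 0)]
    have hp : X ∣ p := X_dvd_iff.mpr hp0
    exact dvd_add (pow_two (X : R[X]) ▸ mul_dvd_mul hp hp) (ih (by simpa [hp0] using hpt))

theorem Polynomial.X_ne_isSumSq_add_mul_X_pow_three {s ψ : R[X]} (hs : IsSumSq s) :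
    X ≠ s + ψ * X ^ 3 := by
  intro h
  have h0 : s.coeff 0 = 0 := by
    simpa [coeff_mul_X_pow'] using (congrArg (coeff · 0) h).symm
  obtain ⟨q, rfl⟩ := hs.X_sq_dvd_of_coeff_zero_eq_zero h0
  simpa [coeff_mul_X_pow', coeff_X_pow_mul'] using congrArg (coeff · 1) h

end

open MvPolynomial

theorem stmt_16 :
    ¬ ∃ (σ₁ ψ₁ σ₂ σ₃ : MvPolynomial (Fin 2) ℝ),
      IsSumSq σ₁ ∧ IsSumSq σ₂ ∧ IsSumSq σ₃ ∧
      (X 0 * X 1 + X 1 ^ 2 * X 2 : MvPolynomial (Fin 3) ℝ)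
        = rename (![0, 1] : Fin 2 → Fin 3) σ₁
          + rename (![0, 1] : Fin 2 → Fin 3) ψ₁ * X 1 ^ 3
          + rename (![1, 2] : Fin 2 → Fin 3) σ₂
          + rename (![1, 2] : Fin 2 → Fin 3) σ₃ * X 2 := by
  rintro ⟨σ₁, ψ₁, σ₂, σ₃, h₁, h₂, -, heq⟩
  let φ : MvPolynomial (Fin 3) ℝ →+* Polynomial ℝ := eval₂Hom Polynomial.C ![1, Polynomial.X, 0]
  have hs : IsSumSq (φ (rename ![0, 1] σ₁) + φ (rename ![1, 2] σ₂)) :=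
    ((h₁.map_s16 (rename ![0, 1])).map_s16 φ).add ((h₂.map_s16 (rename ![1, 2])).map_s16 φ)
  have hφ : Polynomial.X = φ (rename ![0, 1] σ₁) + φ (rename ![0, 1] ψ₁) * Polynomial.X ^ 3
      + φ (rename ![1, 2] σ₂) := by
    simpa [φ] using congrArg φ heq
  exact Polynomial.X_ne_isSumSq_add_mul_X_pow_three (ψ := φ (rename ![0, 1] ψ₁)) hs
    (hφ.trans (by ring))
end

section
/- Fix ε > 0 and an integer k ≥ max(2, 1/(4ε²)). Then (1 + x₂²)^k (x₁x₂ + ε(1 + x₁² + x₂²)²) can be written as σ + ψ·x₂³ where σ is a sum of squares of polynomials in (x₁,x₂) and ψ ∈ ℝ[x₁,x₂]. In particular, x₁x₂ + ε(1+x₁²+x₂²)² ∈ (Σ[x₁,x₂] + x₂³ℝ[x₁,x₂]) / (1+x₂²)^k. -/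
open MvPolynomial

/-! Modulo `x₂³` we have `(1 + x₂²)^k ≡ 1 + k x₂²`, so the left-hand side is congruent to
`(1 + k x₂²)(x₁x₂ + ε(1 + x₁² + x₂²)²)`, which modulo `x₂³` equals
`(εx₁² + x₁x₂ + εk x₂²) + ε(1 + x₁² + x₁⁴ + 2x₂² + 2x₁²x₂² + k(2x₁²x₂² + x₁⁴x₂²))`.
The second summand is visibly a sum of squares, and completing the square shows that the binary
quadratic form `εx₁² + x₁x₂ + εk x₂²` is one as soon as `4ε · εk ≥ 1`. -/

theorem exists_one_add_pow_eq {R : Type*} [CommSemiring R] (a : R) (k : ℕ) :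
    ∃ q : R, (1 + a) ^ k = 1 + k * a + a ^ 2 * q := by
  induction k with
  | zero => exact ⟨0, by simp⟩
  | succ n ih =>
    obtain ⟨q, hq⟩ := ih
    exact ⟨n + q + a * q, by rw [pow_succ, hq]; push_cast; ring⟩

section RealAlgebra

variable {A : Type*} [CommRing A] [Algebra ℝ A]

theorem isSumSq_algebraMap {r : ℝ} (hr : 0 ≤ r) : IsSumSq (algebraMap ℝ A r) :=
  IsSquare.isSumSq ⟨algebraMap ℝ A √r, by rw [← map_mul, Real.mul_self_sqrt hr]⟩

theorem isSumSq_quadratic_of_one_le_four_mul {a c : ℝ} (ha : 0 ≤ a) (hac : 1 ≤ 4 * a * c)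
    (p q : A) :
    IsSumSq (algebraMap ℝ A a * p ^ 2 + p * q + algebraMap ℝ A c * q ^ 2) := by
  have hc : 0 < c := pos_of_mul_pos_right (one_pos.trans_le hac) (by positivity)
  have hinv : algebraMap ℝ A (4 * c)⁻¹ * (4 * algebraMap ℝ A c) = 1 := by
    rw [← map_ofNat (algebraMap ℝ A), ← map_mul, ← map_mul, inv_mul_cancel₀ (by positivity),
      map_one]
  have hle : (4 * c)⁻¹ ≤ a := by
    rw [inv_le_iff_one_le_mul₀ (by positivity)]; linarith
  have hsq : algebraMap ℝ A a * p ^ 2 + p * q + algebraMap ℝ A c * q ^ 2 =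
      algebraMap ℝ A (4 * c)⁻¹ * (2 * algebraMap ℝ A c * q + p) ^ 2
        + algebraMap ℝ A (a - (4 * c)⁻¹) * p ^ 2 := by
    rw [map_sub]
    linear_combination (-(p * q) - algebraMap ℝ A c * q ^ 2) * hinv
  rw [hsq]
  exact ((isSumSq_algebraMap (by positivity)).mul (IsSquare.sq _).isSumSq).add
    ((isSumSq_algebraMap (sub_nonneg.mpr hle)).mul (IsSquare.sq _).isSumSq)

end RealAlgebra

theorem stmt_17_general (ε : ℝ) (hε : 0 < ε) (k : ℕ)
    (hkε : 1 / (4 * ε ^ 2) ≤ (k : ℝ)) :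
    ∃ (σ ψ : MvPolynomial (Fin 2) ℝ), IsSumSq σ ∧
      (1 + X 1 ^ 2) ^ k * (X 0 * X 1 + C ε * (1 + X 0 ^ 2 + X 1 ^ 2) ^ 2)
        = σ + ψ * X 1 ^ 3 := by
  set x : MvPolynomial (Fin 2) ℝ := X 0
  set y : MvPolynomial (Fin 2) ℝ := X 1
  set n : MvPolynomial (Fin 2) ℝ := (k : MvPolynomial (Fin 2) ℝ)
  obtain ⟨q, hq⟩ := exists_one_add_pow_eq (y ^ 2) k
  have hεk : 1 ≤ 4 * ε * (ε * k) := by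
    rw [div_le_iff₀ (by positivity)] at hkε; linarith
  have hcross : IsSumSq (C ε * x ^ 2 + x * y + C (ε * k) * y ^ 2) := by
    simpa only [algebraMap_eq] using isSumSq_quadratic_of_one_le_four_mul hε.le hεk x y
  have hrest : IsSumSq (C ε * (1 + x ^ 2 + (x ^ 2) ^ 2 + 2 * (y ^ 2 + (x * y) ^ 2)
      + n * (2 * (x * y) ^ 2 + (x ^ 2 * y) ^ 2))) := by
    have hC : IsSumSq (C ε : MvPolynomial (Fin 2) ℝ) := by
      rw [← algebraMap_eq]; exact isSumSq_algebraMap hε.le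
    have h2 : IsSumSq (2 : MvPolynomial (Fin 2) ℝ) := by exact_mod_cast IsSumSq.natCast 2
    have hsq (p : MvPolynomial (Fin 2) ℝ) : IsSumSq (p ^ 2) := (IsSquare.sq p).isSumSq
    exact hC.mul (((IsSumSq.one.add (hsq _)).add (hsq _)).add (h2.mul ((hsq _).add (hsq _)))
      |>.add ((IsSumSq.natCast k).mul ((h2.mul (hsq _)).add (hsq _))))
  refine ⟨_, C ε * y + n * x + 2 * C ε * n * (1 + x ^ 2) * y + C ε * n * y ^ 3
      + y * q * (x * y + C ε * (1 + x ^ 2 + y ^ 2) ^ 2), hcross.add hrest, ?_⟩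
  rw [hq, map_mul, map_natCast]
  ring

theorem stmt_17 (ε : ℝ) (hε : 0 < ε) (k : ℕ) (hk2 : 2 ≤ k)
    (hkε : 1 / (4 * ε ^ 2) ≤ (k : ℝ)) :
    ∃ (σ ψ : MvPolynomial (Fin 2) ℝ), IsSumSq σ ∧
      (1 + X 1 ^ 2) ^ k * (X 0 * X 1 + C ε * (1 + X 0 ^ 2 + X 1 ^ 2) ^ 2)
        = σ + ψ * X 1 ^ 3 :=
  stmt_17_general ε hε k hkε
end
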